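/- arXiv:1910.12572 — 4 statements merged into one kernel-verified Lean document; each statement's English description precedes it below -/
import Mathlib

section
/- Let A ∈ ℝ^{n×n} be stable (every eigenvalue has strictly negative real part). Then for every δ ∈ (−1,1) and every ω ∈ ℝ the matrix iω·I − (((1−δ)/(1+δ))·A − I) is invertible, and the Kreiss constant satisfies K(A) = sup_{δ ∈ (−1,1)} sup_{ω ∈ ℝ} ‖(iω·I − (((1−δ)/(1+δ))·A − I))⁻¹‖. -/
open Matrix

/-- Spectral norm (largest singular value): the operator norm induced by Euclidean norms. -/
noncomputable def specNorm {𝕜 : Type*} [RCLike 𝕜] {m n : Type*} [Fintype m] [Fintype n]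
    [DecidableEq n] (M : Matrix m n 𝕜) : ℝ :=
  ‖LinearMap.toContinuousLinearMap (Matrix.toEuclideanLin M)‖

/-- A real square matrix is stable (Hurwitz) if all of its complex eigenvalues
(roots of its characteristic polynomial over `ℂ`) have strictly negative real part. -/
def IsStable {n : Type*} [Fintype n] [DecidableEq n] (A : Matrix n n ℝ) : Prop :=
  ∀ z : ℂ, ((A.map (algebraMap ℝ ℂ)).charpoly).IsRoot z → z.re < 0

/-- The Kreiss constant `K(A) = sup_{Re s > 0} Re(s) ‖(sI - A)⁻¹‖`. -/
noncomputable def Kreiss {n : Type*} [Fintype n] [DecidableEq n] (A : Matrix n n ℝ) : ℝ :=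
  sSup {r : ℝ | ∃ s : ℂ, 0 < s.re ∧
    r = s.re * specNorm ((s • (1 : Matrix n n ℂ) - A.map (algebraMap ℝ ℂ))⁻¹)}

/-- Transient growth `M₀(A) = sup_{t ≥ 0} ‖exp(tA)‖`. -/
noncomputable def transientGrowth {n : Type*} [Fintype n] [DecidableEq n]
    (A : Matrix n n ℝ) : ℝ :=
  sSup {r : ℝ | ∃ t : ℝ, 0 ≤ t ∧ r = specNorm (NormedSpace.exp (t • A))}

/-! For `t > 0` one has `iω - (tA - 1) = t • ((1 + iω)/t - A)`, so the norm of its inverse is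
`Re(s) ‖(s - A)⁻¹‖` with `s = (1 + iω)/t`, and `(t, ω) ↦ (1 + iω)/t` maps `(0, ∞) × ℝ` onto the
open right half-plane, which misses the spectrum of a stable `A`. Finally
`δ ↦ (1 - δ)/(1 + δ)` maps `(-1, 1)` onto `(0, ∞)`. -/

namespace Matrix

variable {n : Type*} [Fintype n] [DecidableEq n]

-- Both sides are the junk value `0` when `M` is singular.
theorem inv_smul_of_ne_zero {K : Type*} [Field K] (M : Matrix n n K) {c : K} (hc : c ≠ 0) :
    (c • M)⁻¹ = c⁻¹ • M⁻¹ := by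
  by_cases hM : IsUnit M.det
  · exact inv_smul' M (Units.mk0 c hc) hM
  · have hcM : ¬IsUnit (c • M).det := by
      rwa [det_smul, IsUnit.mul_iff, and_iff_right ((isUnit_iff_ne_zero.2 hc).pow _)]
    rw [nonsing_inv_apply_not_isUnit _ hcM, nonsing_inv_apply_not_isUnit _ hM, smul_zero]

theorem isUnit_smul_one_sub_of_re_pos {B : Matrix n n ℂ}
    (hB : ∀ z : ℂ, B.charpoly.IsRoot z → z.re < 0) {s : ℂ} (hs : 0 < s.re) :
    IsUnit (s • (1 : Matrix n n ℂ) - B) := by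
  have hσ : s ∉ spectrum ℂ B := fun h => (hB s (mem_spectrum_iff_isRoot_charpoly.mp h)).not_gt hs
  rwa [spectrum.mem_iff, not_not, Algebra.algebraMap_eq_smul_one] at hσ

end Matrix

theorem specNorm_smul {𝕜 : Type*} [RCLike 𝕜] {m n : Type*} [Fintype m] [Fintype n]
    [DecidableEq n] (c : 𝕜) (M : Matrix m n 𝕜) : specNorm (c • M) = ‖c‖ * specNorm M := by
  simp only [specNorm, map_smul, norm_smul]

theorem image_one_sub_div_one_add_Ioo :
    (fun δ : ℝ => (1 - δ) / (1 + δ)) '' Set.Ioo (-1) 1 = Set.Ioi 0 := by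
  ext t
  constructor
  · rintro ⟨δ, ⟨hδ₁, hδ₂⟩, rfl⟩
    show 0 < (1 - δ) / (1 + δ)
    exact div_pos (by linarith) (by linarith)
  · intro (ht : 0 < t)
    refine ⟨(1 - t) / (1 + t), ⟨?_, ?_⟩, ?_⟩
    · rw [lt_div_iff₀ (by linarith)]; linarith
    · rw [div_lt_one (by linarith)]; linarith
    · field_simp; ring

section Reparam

open Complex

variable {n : Type*} [DecidableEq n]

theorem reparam_matrix_eq_smul (B : Matrix n n ℂ) {t : ℝ} (ht : t ≠ 0) (ω : ℝ) :
    (I * ω) • (1 : Matrix n n ℂ) - ((t : ℂ) • B - 1) =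
      (t : ℂ) • (((1 + I * ω) / t) • (1 : Matrix n n ℂ) - B) := by
  rw [smul_sub, smul_smul, mul_div_cancel₀ _ (ofReal_ne_zero.2 ht), add_smul, one_smul]
  abel

theorem re_one_add_I_mul_div (t ω : ℝ) : ((1 + I * ω) / t).re = t⁻¹ := by
  simp [div_ofReal_re]

variable [Fintype n]

theorem isUnit_reparam_matrix {B : Matrix n n ℂ}
    (hB : ∀ z : ℂ, B.charpoly.IsRoot z → z.re < 0) {t : ℝ} (ht : 0 < t) (ω : ℝ) :
    IsUnit ((I * ω) • (1 : Matrix n n ℂ) - ((t : ℂ) • B - 1)) := by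
  have hs : 0 < ((1 + I * ω) / t).re := by rw [re_one_add_I_mul_div]; positivity
  rw [reparam_matrix_eq_smul B ht.ne']
  exact (Matrix.isUnit_smul_one_sub_of_re_pos hB hs).smul
    (Units.mk0 (t : ℂ) (ofReal_ne_zero.2 ht.ne'))

theorem specNorm_inv_reparam_matrix (B : Matrix n n ℂ) {t : ℝ} (ht : 0 < t) (ω : ℝ) :
    specNorm (((I * ω) • (1 : Matrix n n ℂ) - ((t : ℂ) • B - 1))⁻¹) =
      ((1 + I * ω) / t).re * specNorm ((((1 + I * ω) / t) • (1 : Matrix n n ℂ) - B)⁻¹) := by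
  rw [reparam_matrix_eq_smul B ht.ne', Matrix.inv_smul_of_ne_zero _ (ofReal_ne_zero.2 ht.ne'),
    specNorm_smul, norm_inv, norm_real, Real.norm_of_nonneg ht.le, re_one_add_I_mul_div]

theorem re_mul_specNorm_resolvent_set_eq (B : Matrix n n ℂ) :
    {r : ℝ | ∃ s : ℂ, 0 < s.re ∧ r = s.re * specNorm ((s • (1 : Matrix n n ℂ) - B)⁻¹)} =
      {r : ℝ | ∃ t ∈ Set.Ioi (0 : ℝ), ∃ ω : ℝ,
        r = specNorm (((I * ω) • (1 : Matrix n n ℂ) - ((t : ℂ) • B - 1))⁻¹)} := by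
  ext r
  constructor
  · rintro ⟨s, hs, rfl⟩
    refine ⟨s.re⁻¹, inv_pos.2 hs, s.im / s.re, ?_⟩
    have hs_eq : (1 + I * ↑(s.im / s.re)) / ↑s.re⁻¹ = s := by
      apply Complex.ext
      · simp [div_ofReal_re]
      · simp [div_ofReal_im]; field_simp
    rw [specNorm_inv_reparam_matrix B (inv_pos.2 hs), hs_eq]
  · rintro ⟨t, ht, ω, rfl⟩
    refine ⟨(1 + I * ω) / t, ?_, specNorm_inv_reparam_matrix B ht ω⟩
    rw [re_one_add_I_mul_div]
    exact inv_pos.2 ht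

end Reparam

/-- For a stable `A`, every matrix `iω I - (((1-δ)/(1+δ)) A - I)` with
`δ ∈ (-1,1)`, `ω ∈ ℝ` is invertible, and the Kreiss constant equals the supremum of the
spectral norms of their inverses. -/
theorem kreiss_eq_sup_resolvent_reparam {n : ℕ} (A : Matrix (Fin n) (Fin n) ℝ)
    (hA : IsStable A) :
    (∀ δ ∈ Set.Ioo (-1 : ℝ) 1, ∀ ω : ℝ,
      IsUnit ((Complex.I * (ω : ℂ)) • (1 : Matrix (Fin n) (Fin n) ℂ) -
        ((((1 - δ) / (1 + δ) : ℝ) : ℂ) • A.map (algebraMap ℝ ℂ) - 1))) ∧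
    Kreiss A = sSup {r : ℝ | ∃ δ ∈ Set.Ioo (-1 : ℝ) 1, ∃ ω : ℝ,
      r = specNorm (((Complex.I * (ω : ℂ)) • (1 : Matrix (Fin n) (Fin n) ℂ) -
        ((((1 - δ) / (1 + δ) : ℝ) : ℂ) • A.map (algebraMap ℝ ℂ) - 1))⁻¹)} := by
  have hparam := image_one_sub_div_one_add_Ioo
  refine ⟨fun δ hδ ω ↦ isUnit_reparam_matrix hA (hparam.subset (Set.mem_image_of_mem _ hδ)) ω,
    ?_⟩
  rw [Kreiss, re_mul_specNorm_resolvent_set_eq, ← hparam]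
  simp only [Set.exists_mem_image]
end

section
/- Let M ∈ ℂ^{2n×2n} be partitioned into n×n blocks M = [[M₁₁, M₁₂],[M₂₁, M₂₂]] and let γ > 0. Then the following are equivalent: (1) for every δ ∈ [−1,1] the matrix I_n − δM₁₁ is invertible and the largest singular value of M₂₂ + δ·M₂₁(I_n − δM₁₁)⁻¹M₁₂ is strictly less than γ; (2) for every real δ with |δ| ≤ 1 and every Δ_p ∈ ℂ^{n×n} with largest singular value at most 1, the matrix I_{2n} − M·diag(δ·I_n, γ⁻¹·Δ_p) is invertible (here diag(δ·I_n, γ⁻¹·Δ_p) is the block-diagonal 2n×2n matrix with blocks δ·I_n and γ⁻¹·Δ_p). -/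
/-!
By the Schur complement with respect to the invertible block `I - δ M₁₁`, the matrix
`I - M diag(δ I, γ⁻¹ Δp)` is invertible exactly when `I - γ⁻¹ F(δ) Δp` is, where `F(δ)` is the LFT.
If `‖F(δ)‖ < γ` this follows from the Neumann series (small gain). Conversely, if `‖F(δ)‖ ≥ γ`, take
a vector `x` of norm at most one at which `F(δ)` attains its norm; the rank-one contraction
`Δp = γ ‖F(δ)‖⁻² x (F(δ) x)*` sends `F(δ) x` to `γ x`, so `F(δ) x` lies in the kernel of
`I - γ⁻¹ F(δ) Δp`. Invertibility of `I - δ M₁₁` itself is the case `Δp = 0`.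
-/

open Matrix

open scoped Matrix.Norms.L2Operator

namespace Matrix

variable {R : Type*} [CommRing R] {m n : Type*} [Fintype m] [Fintype n] [DecidableEq m]
  [DecidableEq n]

theorem one_sub_fromBlocks_mul_fromBlocks_diag (M₁₁ : Matrix m m R) (M₁₂ : Matrix m n R)
    (M₂₁ : Matrix n m R) (M₂₂ : Matrix n n R) (D₁ : Matrix m m R) (D₂ : Matrix n n R) :
    1 - fromBlocks M₁₁ M₁₂ M₂₁ M₂₂ * fromBlocks D₁ 0 0 D₂ =
      fromBlocks (1 - M₁₁ * D₁) (-(M₁₂ * D₂)) (-(M₂₁ * D₁)) (1 - M₂₂ * D₂) := by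
  rw [fromBlocks_multiply, ← fromBlocks_one, sub_eq_add_neg, fromBlocks_neg, fromBlocks_add]
  simp [sub_eq_add_neg]

theorem isUnit_one_sub_fromBlocks_mul_fromBlocks_iff (M₁₁ : Matrix m m R) (M₁₂ : Matrix m n R)
    (M₂₁ : Matrix n m R) (M₂₂ : Matrix n n R) (D₁ : Matrix m m R) (D₂ : Matrix n n R)
    (h : IsUnit (1 - M₁₁ * D₁)) :
    IsUnit (1 - fromBlocks M₁₁ M₁₂ M₂₁ M₂₂ * fromBlocks D₁ 0 0 D₂) ↔
      IsUnit (1 - (M₂₂ + M₂₁ * D₁ * (1 - M₁₁ * D₁)⁻¹ * M₁₂) * D₂) := by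
  have := h.invertible
  rw [one_sub_fromBlocks_mul_fromBlocks_diag, isUnit_fromBlocks_iff_of_invertible₁₁,
    invOf_eq_nonsing_inv]
  simp only [Matrix.add_mul, Matrix.neg_mul, Matrix.mul_neg, neg_neg, sub_sub, Matrix.mul_assoc]

theorem isUnit_one_sub_fromBlocks_mul_fromBlocks_zero_iff (M₁₁ : Matrix m m R) (M₁₂ : Matrix m n R)
    (M₂₁ : Matrix n m R) (M₂₂ : Matrix n n R) (D₁ : Matrix m m R) :
    IsUnit (1 - fromBlocks M₁₁ M₁₂ M₂₁ M₂₂ * fromBlocks D₁ 0 0 (0 : Matrix n n R)) ↔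
      IsUnit (1 - M₁₁ * D₁) := by
  simp [one_sub_fromBlocks_mul_fromBlocks_diag]

theorem isUnit_one_sub_fromBlocks_mul_fromBlocks_smul_one_iff (M₁₁ : Matrix m m R)
    (M₁₂ : Matrix m n R) (M₂₁ : Matrix n m R) (M₂₂ : Matrix n n R) (δ : R) (D : Matrix n n R)
    (h : IsUnit (1 - δ • M₁₁)) :
    IsUnit (1 - fromBlocks M₁₁ M₁₂ M₂₁ M₂₂ * fromBlocks (δ • 1) 0 0 D) ↔
      IsUnit (1 - (M₂₂ + δ • (M₂₁ * (1 - δ • M₁₁)⁻¹ * M₁₂)) * D) := by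
  have hδ : M₁₁ * (δ • 1) = δ • M₁₁ := by simp
  rw [isUnit_one_sub_fromBlocks_mul_fromBlocks_iff _ _ _ _ _ _ (hδ ▸ h), hδ]
  simp [Matrix.smul_mul]

end Matrix

theorem specNorm_eq_l2_opNorm {𝕜 : Type*} [RCLike 𝕜] {m n : Type*} [Fintype m] [Fintype n]
    [DecidableEq n] (A : Matrix m n 𝕜) : specNorm A = ‖A‖ := rfl

namespace ContinuousLinearMap

variable {𝕜 E F : Type*} [RCLike 𝕜] [NormedAddCommGroup E] [NormedAddCommGroup F]
  [NormedSpace 𝕜 F]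

theorem exists_norm_le_one_norm_apply_eq_norm [NormedSpace 𝕜 E] [ProperSpace E]
    (f : E →L[𝕜] F) : ∃ x, ‖x‖ ≤ 1 ∧ ‖f x‖ = ‖f‖ := by
  obtain ⟨x, hx, hfx⟩ := ((isCompact_closedBall (0 : E) 1).image (by fun_prop :
    Continuous fun x => ‖f x‖)).sSup_mem ((Metric.nonempty_closedBall.2 zero_le_one).image _)
  exact ⟨x, mem_closedBall_zero_iff.1 hx, hfx.trans f.sSup_unitClosedBall_eq_norm⟩

theorem exists_norm_le_inv_not_isUnit_one_sub_mul [InnerProductSpace 𝕜 E] [ProperSpace E]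
    (T : E →L[𝕜] E) (hT : T ≠ 0) : ∃ R : E →L[𝕜] E, ‖R‖ ≤ ‖T‖⁻¹ ∧ ¬IsUnit (1 - T * R) := by
  obtain ⟨x, hx, hTx⟩ := T.exists_norm_le_one_norm_apply_eq_norm
  have hT : 0 < ‖T‖ := norm_pos_iff.2 hT
  set c : 𝕜 := (((‖T‖ ^ 2)⁻¹ : ℝ) : 𝕜)
  refine ⟨c • (innerSL 𝕜 (T x)).smulRight x, ?_, fun hR => ?_⟩
  · have hc : ‖c‖ = (‖T‖ ^ 2)⁻¹ := by simp [c]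
    calc ‖c • (innerSL 𝕜 (T x)).smulRight x‖ = (‖T‖ ^ 2)⁻¹ * (‖T‖ * ‖x‖) := by
          rw [norm_smul, norm_smulRight_apply, innerSL_apply_norm, hTx, hc]
      _ ≤ (‖T‖ ^ 2)⁻¹ * (‖T‖ * 1) := by gcongr
      _ = ‖T‖⁻¹ := by field_simp
  · have hc : c * inner 𝕜 (T x) (T x) = 1 := by
      rw [inner_self_eq_norm_sq_to_K, hTx]
      simp [c, hT.ne']
    have hRTx : (c • (innerSL 𝕜 (T x)).smulRight x) (T x) = x := by
      rw [_root_.smul_apply, smulRight_apply, innerSL_apply_apply, smul_smul, hc, one_smul]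
    have hker : (1 - T * c • (innerSL 𝕜 (T x)).smulRight x) (T x) = 0 := by
      rw [_root_.sub_apply, one_apply_eq_self, mul_apply_eq_comp, hRTx, sub_self]
    have : T x ≠ 0 := by rw [← norm_pos_iff, hTx]; exact hT
    exact this ((isUnit_iff_bijective.1 hR).1 (hker.trans (map_zero _).symm))

end ContinuousLinearMap

theorem isUnit_one_sub_mul_inv_smul {𝕜 A : Type*} [RCLike 𝕜] [NormedRing A]
    [NormedAlgebra 𝕜 A] [HasSummableGeomSeries A] {G Δ : A} {γ : ℝ} (hγ : 0 < γ) (hG : ‖G‖ < γ)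
    (hΔ : ‖Δ‖ ≤ 1) : IsUnit (1 - G * ((γ : 𝕜)⁻¹ • Δ)) := by
  refine (Units.oneSub _ ?_).isUnit
  calc ‖G * ((γ : 𝕜)⁻¹ • Δ)‖ ≤ ‖G‖ * (γ⁻¹ * ‖Δ‖) := by
        grw [norm_mul_le, norm_smul, norm_inv, RCLike.norm_ofReal, abs_of_pos hγ]
    _ ≤ ‖G‖ * γ⁻¹ := by gcongr; exact mul_le_of_le_one_right (by positivity) hΔ
    _ < γ * γ⁻¹ := by gcongr
    _ = 1 := mul_inv_cancel₀ hγ.ne'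

namespace Matrix

variable {𝕜 ι : Type*} [RCLike 𝕜] [Fintype ι] [DecidableEq ι]

theorem exists_l2_opNorm_le_inv_not_isUnit_one_sub_mul (G : Matrix ι ι 𝕜) (hG : G ≠ 0) :
    ∃ Δ : Matrix ι ι 𝕜, ‖Δ‖ ≤ ‖G‖⁻¹ ∧ ¬IsUnit (1 - G * Δ) := by
  obtain ⟨R, hR, hsing⟩ := (toEuclideanCLM (𝕜 := 𝕜) G).exists_norm_le_inv_not_isUnit_one_sub_mul
    ((map_ne_zero_iff _ toEuclideanCLM.injective).2 hG)
  refine ⟨(toEuclideanCLM (𝕜 := 𝕜) (n := ι)).symm R, ?_, fun h => hsing ?_⟩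
  · rwa [cstar_norm_def, cstar_norm_def G, StarAlgEquiv.apply_symm_apply]
  · simpa using h.map (toEuclideanCLM (𝕜 := 𝕜) (n := ι))

theorem exists_l2_opNorm_le_one_not_isUnit_one_sub_mul_inv_smul (G : Matrix ι ι 𝕜) {γ : ℝ}
    (hγ : 0 < γ) (hγG : γ ≤ ‖G‖) :
    ∃ Δ : Matrix ι ι 𝕜, ‖Δ‖ ≤ 1 ∧ ¬IsUnit (1 - G * ((γ : 𝕜)⁻¹ • Δ)) := by
  have hG : G ≠ 0 := by
    rintro rfl
    rw [norm_zero] at hγG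
    linarith
  obtain ⟨Δ, hΔ, hsing⟩ := G.exists_l2_opNorm_le_inv_not_isUnit_one_sub_mul hG
  refine ⟨(γ : 𝕜) • Δ, ?_, ?_⟩
  · calc ‖(γ : 𝕜) • Δ‖ = γ * ‖Δ‖ := by rw [norm_smul, RCLike.norm_ofReal, abs_of_pos hγ]
      _ ≤ γ * ‖G‖⁻¹ := by gcongr
      _ ≤ 1 := by rw [← div_eq_mul_inv]; exact div_le_one_of_le₀ hγG (norm_nonneg G)
  · rwa [smul_smul, inv_mul_cancel₀ (RCLike.ofReal_ne_zero.2 hγ.ne'), one_smul]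

end Matrix

/-- Well-posedness with worst-case gain `< γ` of the LFT
`δ ↦ M₂₂ + δ M₂₁ (I - δ M₁₁)⁻¹ M₁₂` on `[-1,1]` is equivalent to robust invertibility of
`I - M diag(δ I, γ⁻¹ Δp)` over all `|δ| ≤ 1` and contractive full blocks `Δp`. -/
theorem lft_wellposed_gain_iff_mu {n : ℕ}
    (M₁₁ M₁₂ M₂₁ M₂₂ : Matrix (Fin n) (Fin n) ℂ) (γ : ℝ) (hγ : 0 < γ) :
    (∀ δ ∈ Set.Icc (-1 : ℝ) 1,
      IsUnit ((1 : Matrix (Fin n) (Fin n) ℂ) - (δ : ℂ) • M₁₁) ∧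
      specNorm (M₂₂ + (δ : ℂ) •
        (M₂₁ * ((1 : Matrix (Fin n) (Fin n) ℂ) - (δ : ℂ) • M₁₁)⁻¹ * M₁₂)) < γ)
    ↔
    (∀ δ : ℝ, |δ| ≤ 1 → ∀ Δp : Matrix (Fin n) (Fin n) ℂ, specNorm Δp ≤ 1 →
      IsUnit ((1 : Matrix (Fin n ⊕ Fin n) (Fin n ⊕ Fin n) ℂ) -
        Matrix.fromBlocks M₁₁ M₁₂ M₂₁ M₂₂ *
          Matrix.fromBlocks ((δ : ℂ) • 1) 0 0 (((γ : ℂ))⁻¹ • Δp))) := by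
  simp only [specNorm_eq_l2_opNorm]
  constructor
  · rintro h δ hδ Δp hΔp
    obtain ⟨hA, hG⟩ := h δ (Set.mem_Icc.2 (abs_le.1 hδ))
    rw [isUnit_one_sub_fromBlocks_mul_fromBlocks_smul_one_iff _ _ _ _ _ _ hA]
    exact isUnit_one_sub_mul_inv_smul hγ hG hΔp
  · intro h δ hδ
    have hδ' : |δ| ≤ 1 := abs_le.2 hδ
    have hA : IsUnit (1 - (δ : ℂ) • M₁₁) := by
      have h0 := h δ hδ' 0 (by simp)
      rwa [smul_zero, isUnit_one_sub_fromBlocks_mul_fromBlocks_zero_iff, Matrix.mul_smul,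
        Matrix.mul_one] at h0
    refine ⟨hA, lt_of_not_ge fun hγG => ?_⟩
    obtain ⟨Δp, hΔp, hsing⟩ := exists_l2_opNorm_le_one_not_isUnit_one_sub_mul_inv_smul _ hγ hγG
    exact hsing ((isUnit_one_sub_fromBlocks_mul_fromBlocks_smul_one_iff _ _ _ _ _ _ hA).1
      (h δ hδ' Δp hΔp))
end

section
/- Let A ∈ ℝ^{n×n}. Then the function t ↦ ‖exp(tA)‖ has right derivative at t = 0 equal to the numerical abscissa: lim_{t→0⁺} (‖exp(tA)‖ − 1)/t = ω(A). -/
open Matrix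

/-- Largest (real) eigenvalue of a real (symmetric) matrix: the supremum of the real
roots of its characteristic polynomial. -/
noncomputable def maxEig {n : Type*} [Fintype n] [DecidableEq n] (S : Matrix n n ℝ) : ℝ :=
  sSup {μ : ℝ | S.charpoly.IsRoot μ}

/-- The numerical abscissa `ω(A) = ½ λ̄(A + Aᵀ)`. -/
noncomputable def numAbscissa {n : Type*} [Fintype n] [DecidableEq n]
    (A : Matrix n n ℝ) : ℝ :=
  maxEig (A + Aᵀ) / 2

/-! If `⟪T y, y⟫ ≤ ω ‖y‖²` for all `y`, then `s ↦ e^{-2ωs} ‖e^{sT} x‖²` has nonpositive derivative,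
so `‖e^{tT}‖ ≤ e^{ωt}` for `t ≥ 0`. If moreover `⟪T x, x⟫ = ω` for a unit vector `x`, then
`t ↦ ‖e^{tT} x‖`, which lies below `‖e^{tT}‖` and equals `1` at `t = 0`, has derivative `ω` there.
The right difference quotient of `‖e^{tT}‖` at `0` is squeezed between those of these two
functions. For a real matrix `A`, `⟪A y, y⟫ = ½ ⟪(A + Aᵀ) y, y⟫`, so `ω(A)` is the maximum of
`⟪A y, y⟫` over unit vectors, attained at a top eigenvector of `A + Aᵀ`. -/

open NormedSpace Filter Topology
open scoped RealInnerProductSpace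

section InnerProductSpace

variable {E : Type*} [NormedAddCommGroup E] [InnerProductSpace ℝ E] [CompleteSpace E]
  (T : E →L[ℝ] E)

theorem hasDerivAt_exp_smul_apply (x : E) (t : ℝ) :
    HasDerivAt (fun s : ℝ => exp (s • T) x) (T (exp (t • T) x)) t := by
  simpa using (hasDerivAt_exp_smul_const' (𝕂 := ℝ) T t).clm_apply (hasDerivAt_const t x)

theorem norm_exp_smul_apply_le {ω : ℝ} (hT : ∀ y, ⟪T y, y⟫ ≤ ω * ‖y‖ ^ 2) {t : ℝ} (ht : 0 ≤ t)
    (x : E) : ‖exp (t • T) x‖ ≤ Real.exp (ω * t) * ‖x‖ := by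
  set u : ℝ → E := fun s => exp (s • T) x
  set g : ℝ → ℝ := fun s => Real.exp (-(2 * ω) * s) * ‖u s‖ ^ 2
  have hg : ∀ s, HasDerivAt g
      (Real.exp (-(2 * ω) * s) * (2 * (⟪u s, T (u s)⟫ - ω * ‖u s‖ ^ 2))) s := by
    intro s
    have hexp : HasDerivAt (fun s => Real.exp (-(2 * ω) * s))
        (Real.exp (-(2 * ω) * s) * -(2 * ω)) s := by
      simpa using ((hasDerivAt_id' s).const_mul (-(2 * ω))).exp
    exact (hexp.mul (hasDerivAt_exp_smul_apply T x s).norm_sq).congr_deriv (by ring)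
  have hg_anti : Antitone g := by
    refine antitone_of_deriv_nonpos (fun s => (hg s).differentiableAt) fun s => ?_
    rw [(hg s).deriv]
    exact mul_nonpos_of_nonneg_of_nonpos (Real.exp_pos _).le
      (by linarith [real_inner_comm (u s) (T (u s)), hT (u s)])
  have hg_le : g t ≤ g 0 := hg_anti ht
  simp only [g, u, zero_smul, exp_zero, mul_zero, Real.exp_zero, one_mul,
    one_apply_eq_self] at hg_le
  rw [← inv_mul_le_iff₀ (Real.exp_pos _), ← Real.exp_neg]
  refine (pow_le_pow_iff_left₀ (by positivity) (norm_nonneg _) two_ne_zero).1 ?_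
  calc (Real.exp (-(ω * t)) * ‖exp (t • T) x‖) ^ 2
      = Real.exp (-(2 * ω) * t) * ‖exp (t • T) x‖ ^ 2 := by
        rw [mul_pow, ← Real.exp_nat_mul]
        ring_nf
    _ ≤ ‖x‖ ^ 2 := hg_le

theorem norm_exp_smul_le {ω : ℝ} (hT : ∀ y, ⟪T y, y⟫ ≤ ω * ‖y‖ ^ 2) {t : ℝ} (ht : 0 ≤ t) :
    ‖exp (t • T)‖ ≤ Real.exp (ω * t) :=
  ContinuousLinearMap.opNorm_le_bound _ (Real.exp_pos _).le (norm_exp_smul_apply_le T hT ht)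

theorem hasDerivAt_norm_exp_smul_apply_zero {x : E} (hx : ‖x‖ = 1) :
    HasDerivAt (fun t : ℝ => ‖exp (t • T) x‖) ⟪T x, x⟫ 0 := by
  have hsq := (hasDerivAt_exp_smul_apply T x 0).norm_sq
  simp only [zero_smul, exp_zero, one_apply_eq_self] at hsq
  have := hsq.sqrt (by simp [hx])
  simp only [Real.sqrt_sq (norm_nonneg _)] at this
  convert this using 1
  simp [hx, real_inner_comm]

theorem tendsto_slope_norm_exp_smul_nhdsGT {ω : ℝ} (hT : ∀ y, ⟪T y, y⟫ ≤ ω * ‖y‖ ^ 2) {x : E}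
    (hx : ‖x‖ = 1) (hTx : ⟪T x, x⟫ = ω) :
    Tendsto (fun t : ℝ => (‖exp (t • T)‖ - 1) / t) (𝓝[>] 0) (𝓝 ω) := by
  have hlower : Tendsto (fun t : ℝ => (‖exp (t • T) x‖ - 1) / t) (𝓝[>] 0) (𝓝 ω) := by
    simpa [hTx, hx, div_eq_inv_mul] using
      (hasDerivAt_norm_exp_smul_apply_zero T hx).tendsto_slope_zero_right
  have hupper : Tendsto (fun t : ℝ => (Real.exp (ω * t) - 1) / t) (𝓝[>] 0) (𝓝 ω) := by
    simpa [div_eq_inv_mul] using ((hasDerivAt_id' 0).const_mul ω).exp.tendsto_slope_zero_right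
  refine tendsto_of_tendsto_of_tendsto_of_le_of_le' hlower hupper ?_ ?_ <;>
    filter_upwards [self_mem_nhdsWithin] with t (ht : 0 < t) <;> gcongr
  · simpa [hx] using (exp (t • T)).le_opNorm x
  · exact norm_exp_smul_le T hT ht.le

end InnerProductSpace

namespace Matrix

variable {n : Type*} [Fintype n] [DecidableEq n]

theorem toEuclideanCLM_exp (B : Matrix n n ℝ) :
    toEuclideanCLM (𝕜 := ℝ) (exp B) = exp (toEuclideanCLM (𝕜 := ℝ) B) := by
  let e := (toEuclideanCLM (𝕜 := ℝ) (n := n)).toAlgEquiv.toLinearEquiv.toContinuousLinearEquiv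
  simp_rw [exp_eq_tsum_rat]
  simpa [e, map_pow, map_rat_smul] using
    e.map_tsum (L := SummationFilter.unconditional ℕ) (f := fun k => (k.factorial⁻¹ : ℚ) • B ^ k)

theorem inner_toEuclideanCLM_add_transpose_self (A : Matrix n n ℝ) (x : EuclideanSpace ℝ n) :
    ⟪toEuclideanCLM (𝕜 := ℝ) (A + Aᵀ) x, x⟫ = 2 * ⟪toEuclideanCLM (𝕜 := ℝ) A x, x⟫ := by
  rw [real_inner_comm x, real_inner_comm x, inner_toEuclideanCLM, inner_toEuclideanCLM,
    add_mulVec, dotProduct_add, mulVec_transpose, dotProduct_comm x.ofLp (vecMul _ _),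
    ← dotProduct_mulVec, two_mul]

namespace IsHermitian

variable {S : Matrix n n ℝ} (hS : S.IsHermitian)

theorem setOf_isRoot_charpoly_eq_range_eigenvalues :
    {μ | S.charpoly.IsRoot μ} = Set.range hS.eigenvalues := by
  ext μ
  rw [← hS.spectrum_real_eq_range_eigenvalues, Set.mem_ofPred_eq, mem_spectrum_iff_isRoot_charpoly]

theorem eigenvalues_le_maxEig (i : n) : hS.eigenvalues i ≤ maxEig S := by
  rw [maxEig, hS.setOf_isRoot_charpoly_eq_range_eigenvalues]
  exact le_csSup (Set.finite_range _).bddAbove (Set.mem_range_self i)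

theorem exists_eigenvalues_eq_maxEig [Nonempty n] : ∃ i, hS.eigenvalues i = maxEig S := by
  rw [maxEig, hS.setOf_isRoot_charpoly_eq_range_eigenvalues]
  exact (Set.range_nonempty _).csSup_mem (Set.finite_range _)

theorem inner_toEuclideanCLM_eigenvectorBasis (i : n) :
    ⟪toEuclideanCLM (𝕜 := ℝ) S (hS.eigenvectorBasis i), hS.eigenvectorBasis i⟫ =
      hS.eigenvalues i := by
  rw [real_inner_comm, inner_toEuclideanCLM, hS.eigenvalues_eq]
  rfl

theorem toEuclideanCLM_eigenvectorBasis (i : n) :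
    toEuclideanCLM (𝕜 := ℝ) S (hS.eigenvectorBasis i) =
      hS.eigenvalues i • hS.eigenvectorBasis i :=
  WithLp.ofLp_injective _ (hS.mulVec_eigenvectorBasis i)

theorem inner_toEuclideanCLM_self_le {c : ℝ} (hc : ∀ i, hS.eigenvalues i ≤ c)
    (x : EuclideanSpace ℝ n) : ⟪toEuclideanCLM (𝕜 := ℝ) S x, x⟫ ≤ c * ‖x‖ ^ 2 := by
  set b := hS.eigenvectorBasis
  calc ⟪toEuclideanCLM (𝕜 := ℝ) S x, x⟫
      = ∑ i, ⟪toEuclideanCLM (𝕜 := ℝ) S x, b i⟫ * ⟪b i, x⟫ := (b.sum_inner_mul_inner _ _).symm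
    _ = ∑ i, hS.eigenvalues i * ⟪b i, x⟫ ^ 2 := by
        refine Finset.sum_congr rfl fun i _ => ?_
        have hsymm : ⟪toEuclideanCLM (𝕜 := ℝ) S x, b i⟫ =
            ⟪x, toEuclideanCLM (𝕜 := ℝ) S (b i)⟫ :=
          isSymmetric_toEuclideanLin_iff.2 hS x (b i)
        rw [hsymm, hS.toEuclideanCLM_eigenvectorBasis, real_inner_smul_right, real_inner_comm x]
        ring
    _ ≤ ∑ i, c * ⟪b i, x⟫ ^ 2 := by gcongr with i; exact hc i
    _ = c * ‖x‖ ^ 2 := by rw [← Finset.mul_sum, b.sum_sq_inner_right]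

end IsHermitian

end Matrix

section NumAbscissa

open Matrix

variable {n : Type*} [Fintype n] [DecidableEq n]

theorem specNorm_exp_smul (A : Matrix n n ℝ) (t : ℝ) :
    specNorm (exp (t • A)) = ‖exp (t • toEuclideanCLM (𝕜 := ℝ) A)‖ := by
  rw [← map_smul, ← toEuclideanCLM_exp]
  rfl

theorem inner_toEuclideanCLM_self_le_numAbscissa (A : Matrix n n ℝ) (y : EuclideanSpace ℝ n) :
    ⟪toEuclideanCLM (𝕜 := ℝ) A y, y⟫ ≤ numAbscissa A * ‖y‖ ^ 2 := by
  have hS : (A + Aᵀ).IsHermitian := isHermitian_iff_isSymm.2 (isSymm_add_transpose_self A)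
  have := hS.inner_toEuclideanCLM_self_le hS.eigenvalues_le_maxEig y
  rw [inner_toEuclideanCLM_add_transpose_self] at this
  rw [numAbscissa]
  linarith

theorem exists_inner_toEuclideanCLM_eq_numAbscissa [Nonempty n] (A : Matrix n n ℝ) :
    ∃ x : EuclideanSpace ℝ n, ‖x‖ = 1 ∧ ⟪toEuclideanCLM (𝕜 := ℝ) A x, x⟫ = numAbscissa A := by
  have hS : (A + Aᵀ).IsHermitian := isHermitian_iff_isSymm.2 (isSymm_add_transpose_self A)
  obtain ⟨i, hi⟩ := hS.exists_eigenvalues_eq_maxEig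
  refine ⟨hS.eigenvectorBasis i, hS.eigenvectorBasis.orthonormal.1 i, ?_⟩
  have := hS.inner_toEuclideanCLM_eigenvectorBasis i
  rw [inner_toEuclideanCLM_add_transpose_self, hi] at this
  rw [numAbscissa]
  linarith

end NumAbscissa

/-- The right derivative of `t ↦ ‖exp(tA)‖` at `t = 0` is the numerical
abscissa: `lim_{t→0⁺} (‖exp(tA)‖ - 1)/t = ω(A)`. -/
theorem right_deriv_norm_exp_eq_numAbscissa {n : ℕ} (hn : 1 ≤ n)
    (A : Matrix (Fin n) (Fin n) ℝ) :
    Filter.Tendsto (fun t : ℝ => (specNorm (NormedSpace.exp (t • A)) - 1) / t)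
      (nhdsWithin 0 (Set.Ioi 0)) (nhds (numAbscissa A)) := by
  have : Nonempty (Fin n) := Fin.pos_iff_nonempty.mp hn
  obtain ⟨x, hx, hAx⟩ := exists_inner_toEuclideanCLM_eq_numAbscissa A
  simpa only [specNorm_exp_smul] using
    tendsto_slope_norm_exp_smul_nhdsGT _ (inner_toEuclideanCLM_self_le_numAbscissa A) hx hAx
end

section
/- Let A ∈ ℝ^{n×n}, n ≥ 1, be stable. Then K(A) = sup_{ε > 0} α_ε(A)/ε, where α_ε(A) is the ε-pseudospectral abscissa of A. -/
open Matrix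
/-- The `ε`-pseudospectral abscissa: the supremum of real parts of points `z ∈ ℂ` which
are eigenvalues of `A` or where the resolvent norm is at least `1/ε`. -/
noncomputable def pseudoAbscissa {n : Type*} [Fintype n] [DecidableEq n]
    (ε : ℝ) (A : Matrix n n ℝ) : ℝ :=
  sSup {r : ℝ | ∃ z : ℂ,
    (((A.map (algebraMap ℝ ℂ)).charpoly).IsRoot z ∨
      1 / ε ≤ specNorm ((z • (1 : Matrix n n ℂ) - A.map (algebraMap ℝ ℂ))⁻¹)) ∧
    r = z.re}

/-! For `Re s > 0` put `ε = 1 / ‖(s - A)⁻¹‖`: then `s` lies in the `ε`-pseudospectrum, so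
`Re s ‖(s - A)⁻¹‖ = Re s / ε ≤ α_ε / ε`. Conversely a point `z` of the `ε`-pseudospectrum with
`Re z > 0` satisfies `Re z / ε ≤ Re z ‖(z - A)⁻¹‖ ≤ K(A)`, while eigenvalues and points with
`Re z ≤ 0` contribute at most `0 ≤ K(A) ε`. Both suprema are finite because the resolvent is
`O(1 / |s|)` at infinity and continuous on the closed right half-plane. Nothing here is specific
to matrices: the argument works for any element of a complex Banach algebra whose spectrum lies in
the open left half-plane. -/

open Filter

theorem map_ringInverse {F R S : Type*} [Semiring R] [Semiring S] [EquivLike F R S]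
    [RingEquivClass F R S] (e : F) (x : R) :
    e (Ring.inverse x) = Ring.inverse (e x) := by
  by_cases hx : IsUnit x
  · calc e (Ring.inverse x) = Ring.inverse (e x) * (e x * e (Ring.inverse x)) :=
          (Ring.inverse_mul_cancel_left _ _ (hx.map e)).symm
      _ = Ring.inverse (e x) := by rw [← map_mul, Ring.mul_inverse_cancel x hx, map_one, mul_one]
  · rw [Ring.inverse_non_unit x hx, Ring.inverse_non_unit _ ((isUnit_map_iff e x).not.mpr hx),
      map_zero]

theorem map_resolvent {F R A B : Type*} [CommSemiring R] [Ring A] [Ring B] [Algebra R A]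
    [Algebra R B] [EquivLike F A B] [AlgEquivClass F R A B] (e : F) (a : A) (r : R) :
    e (resolvent a r) = resolvent (e a) r := by
  rw [resolvent, resolvent, ← AlgHomClass.commutes e r, ← map_sub]
  exact map_ringInverse e _

section KreissConstant

variable {A : Type*} [NormedRing A] [NormedAlgebra ℂ A]

noncomputable def kreissConstant (a : A) : ℝ :=
  sSup {r : ℝ | ∃ s : ℂ, 0 < s.re ∧ r = s.re * ‖resolvent a s‖}

noncomputable def pseudospectralAbscissa (ε : ℝ) (a : A) : ℝ :=
  sSup {r : ℝ | ∃ z : ℂ, (z ∈ spectrum ℂ a ∨ 1 / ε ≤ ‖resolvent a z‖) ∧ r = z.re}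

variable {a : A}

theorem mem_resolventSet_of_re_nonneg (ha : ∀ z ∈ spectrum ℂ a, z.re < 0) {s : ℂ}
    (hs : 0 ≤ s.re) : s ∈ resolventSet ℂ a :=
  spectrum.notMem_iff.mp fun hσ => (ha s hσ).not_ge hs

variable [CompleteSpace A]

theorem exists_re_mul_norm_resolvent_le (ha : ∀ z ∈ spectrum ℂ a, z.re < 0) :
    ∃ C, ∀ s : ℂ, 0 ≤ s.re → s.re * ‖resolvent a s‖ ≤ C := by
  obtain ⟨c, hc0, hO⟩ := (spectrum.resolvent_isBigO_inv (𝕜 := ℂ) a).exists_pos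
  have hc := hO.bound
  rw [Metric.cobounded_eq_cocompact, hasBasis_cocompact.eventually_iff] at hc
  obtain ⟨K, hK, hcK⟩ := hc
  have hcont : ContinuousOn (fun s : ℂ => s.re * ‖resolvent a s‖) {s | 0 ≤ s.re} := by
    intro s hs
    have hres := spectrum.hasDerivAt_resolvent_const_left (mem_resolventSet_of_re_nonneg ha hs)
    exact (Complex.continuous_re.continuousAt.mul hres.continuousAt.norm).continuousWithinAt
  have hKcompact : IsCompact (K ∩ {s : ℂ | 0 ≤ s.re}) :=
    hK.inter_right (isClosed_le continuous_const Complex.continuous_re)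
  obtain ⟨C, hC⟩ := hKcompact.bddAbove_image (hcont.mono Set.inter_subset_right)
  refine ⟨max C c, fun s hs => ?_⟩
  by_cases hsK : s ∈ K
  · exact (hC ⟨s, ⟨hsK, hs⟩, rfl⟩).trans (le_max_left _ _)
  calc s.re * ‖resolvent a s‖ ≤ ‖s‖ * (c * ‖s⁻¹‖) :=
        mul_le_mul (Complex.re_le_norm s) (hcK hsK) (norm_nonneg _) (norm_nonneg _)
    _ = c * (‖s‖ * ‖s‖⁻¹) := by rw [norm_inv]; ring
    _ ≤ c := mul_le_of_le_one_right hc0.le mul_inv_le_one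
    _ ≤ max C c := le_max_right _ _

theorem re_mul_norm_resolvent_le_kreissConstant
    (ha : ∀ z ∈ spectrum ℂ a, z.re < 0) {s : ℂ} (hs : 0 < s.re) :
    s.re * ‖resolvent a s‖ ≤ kreissConstant a := by
  obtain ⟨C, hC⟩ := exists_re_mul_norm_resolvent_le ha
  exact le_csSup ⟨C, fun _ ⟨s, hs, hr⟩ => hr ▸ hC s hs.le⟩ ⟨s, hs, rfl⟩

theorem kreissConstant_nonneg (ha : ∀ z ∈ spectrum ℂ a, z.re < 0) :
    0 ≤ kreissConstant a :=
  (mul_nonneg zero_le_one (norm_nonneg _)).trans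
    (re_mul_norm_resolvent_le_kreissConstant ha (s := 1) (by simp))

theorem re_le_kreissConstant_mul (ha : ∀ z ∈ spectrum ℂ a, z.re < 0)
    {ε : ℝ} (hε : 0 < ε) {z : ℂ} (hz : z ∈ spectrum ℂ a ∨ 1 / ε ≤ ‖resolvent a z‖) :
    z.re ≤ kreissConstant a * ε := by
  have hK := mul_nonneg (kreissConstant_nonneg ha) hε.le
  rcases le_or_gt z.re 0 with hz0 | hz0
  · exact hz0.trans hK
  rcases hz with hσ | hres
  · exact absurd hz0 (ha z hσ).not_gt
  rw [← div_le_iff₀ hε, div_eq_mul_one_div]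
  exact (mul_le_mul_of_nonneg_left hres hz0.le).trans
    (re_mul_norm_resolvent_le_kreissConstant ha hz0)

theorem pseudospectralAbscissa_div_le_kreissConstant
    (ha : ∀ z ∈ spectrum ℂ a, z.re < 0) {ε : ℝ} (hε : 0 < ε) :
    pseudospectralAbscissa ε a / ε ≤ kreissConstant a := by
  rw [div_le_iff₀ hε]
  exact Real.sSup_le (fun _ ⟨z, hz, hr⟩ => hr ▸ re_le_kreissConstant_mul ha hε hz)
    (mul_nonneg (kreissConstant_nonneg ha) hε.le)

theorem re_le_pseudospectralAbscissa (ha : ∀ z ∈ spectrum ℂ a, z.re < 0)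
    {ε : ℝ} (hε : 0 < ε) {z : ℂ} (hz : 1 / ε ≤ ‖resolvent a z‖) :
    z.re ≤ pseudospectralAbscissa ε a :=
  le_csSup ⟨_, fun _ ⟨_, hw, hr⟩ => hr ▸ re_le_kreissConstant_mul ha hε hw⟩ ⟨z, .inr hz, rfl⟩

theorem kreissConstant_eq_sSup_pseudospectralAbscissa_div [Nontrivial A]
    (ha : ∀ z ∈ spectrum ℂ a, z.re < 0) :
    kreissConstant a = sSup {r : ℝ | ∃ ε : ℝ, 0 < ε ∧ r = pseudospectralAbscissa ε a / ε} := by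
  have hbdd : BddAbove {r : ℝ | ∃ ε : ℝ, 0 < ε ∧ r = pseudospectralAbscissa ε a / ε} :=
    ⟨_, fun _ ⟨ε, hε, hr⟩ => hr ▸ pseudospectralAbscissa_div_le_kreissConstant ha hε⟩
  apply le_antisymm
  · refine csSup_le ⟨_, 1, one_pos, rfl⟩ fun _ ⟨s, hs, hr⟩ => hr ▸ ?_
    have hres : 0 < ‖resolvent a s‖ := norm_pos_iff.mpr
      (spectrum.isUnit_resolvent.mp (mem_resolventSet_of_re_nonneg ha hs.le)).ne_zero
    set ε := ‖resolvent a s‖⁻¹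
    have hε : 0 < ε := inv_pos.mpr hres
    calc s.re * ‖resolvent a s‖ = s.re / ε := by simp [ε, div_eq_mul_inv]
      _ ≤ pseudospectralAbscissa ε a / ε := by
          gcongr
          exact re_le_pseudospectralAbscissa ha hε (by simp [ε])
      _ ≤ _ := le_csSup hbdd ⟨ε, hε, rfl⟩
  · exact csSup_le ⟨_, 1, one_pos, rfl⟩ fun _ ⟨ε, hε, hr⟩ =>
      hr ▸ pseudospectralAbscissa_div_le_kreissConstant ha hε

end KreissConstant

section Matrix

variable {n : Type*} [Fintype n] [DecidableEq n]

theorem specNorm_inv_smul_one_sub (M : Matrix n n ℂ) (z : ℂ) :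
    specNorm ((z • (1 : Matrix n n ℂ) - M)⁻¹) = ‖resolvent (toEuclideanCLM (𝕜 := ℂ) M) z‖ := by
  change ‖toEuclideanCLM (n := n) (𝕜 := ℂ) _‖ = _
  rw [← map_resolvent, resolvent, Algebra.algebraMap_eq_smul_one,
    ← nonsing_inv_eq_ringInverse]

theorem kreiss_eq_kreissConstant (A : Matrix n n ℝ) :
    Kreiss A = kreissConstant (toEuclideanCLM (𝕜 := ℂ) (A.map (algebraMap ℝ ℂ))) := by
  simp only [Kreiss, kreissConstant, specNorm_inv_smul_one_sub]

theorem pseudoAbscissa_eq_pseudospectralAbscissa (ε : ℝ) (A : Matrix n n ℝ) :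
    pseudoAbscissa ε A =
      pseudospectralAbscissa ε (toEuclideanCLM (𝕜 := ℂ) (A.map (algebraMap ℝ ℂ))) := by
  simp only [pseudoAbscissa, pseudospectralAbscissa, specNorm_inv_smul_one_sub,
    AlgEquiv.spectrum_eq, mem_spectrum_iff_isRoot_charpoly]

end Matrix

/-- `K(A) = sup_{ε > 0} α_ε(A)/ε`. -/
theorem kreiss_eq_sup_pseudoAbscissa_div {n : ℕ} (hn : 1 ≤ n)
    (A : Matrix (Fin n) (Fin n) ℝ) (hA : IsStable A) :
    Kreiss A = sSup {r : ℝ | ∃ ε : ℝ, 0 < ε ∧ r = pseudoAbscissa ε A / ε} := by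
  have : Nonempty (Fin n) := ⟨⟨0, hn⟩⟩
  simp only [kreiss_eq_kreissConstant, pseudoAbscissa_eq_pseudospectralAbscissa]
  refine kreissConstant_eq_sSup_pseudospectralAbscissa_div fun z hz => hA z ?_
  rwa [AlgEquiv.spectrum_eq, mem_spectrum_iff_isRoot_charpoly] at hz
end
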